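/- For a prime p, where φ(p^n) = p^n - p^{n-1}, the generating function 1 + Σ_{n≥1} φ(p^n)(n(1-p^{-1}) + 1 + p^{-1})·t^n equals ((1-t)/(1-pt))² for |pt| < 1. -/
import Mathlib

theorem stmt18 (p : ℕ) (hp : p.Prime) (t : ℂ) (h : ‖(p : ℂ) * t‖ < 1) :
    1 + ∑' n : ℕ, (Nat.totient (p ^ (n + 1)) : ℂ) *
        (((n : ℂ) + 1) * (1 - (p : ℂ)⁻¹) + 1 + (p : ℂ)⁻¹) * t ^ (n + 1)
      = ((1 - t) / (1 - (p : ℂ) * t)) ^ 2 := by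
  have hp0 : (p : ℂ) ≠ 0 := Nat.cast_ne_zero.mpr hp.ne_zero
  set x : ℂ := (p : ℂ) * t with hx
  have hxne : 1 - x ≠ 0 := by
    intro h'
    have hx1 : x = 1 := by linear_combination -h'
    rw [hx1] at h
    simp at h
  have htot : ∀ n : ℕ, (Nat.totient (p ^ (n + 1)) : ℂ) = (p : ℂ) ^ n * ((p : ℂ) - 1) := by
    intro n
    rw [Nat.totient_prime_pow hp (Nat.succ_pos n)]
    push_cast [Nat.cast_sub hp.one_le]
    ring
  have key : ∀ n : ℕ,
      (Nat.totient (p ^ (n + 1)) : ℂ) *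
        (((n : ℂ) + 1) * (1 - (p : ℂ)⁻¹) + 1 + (p : ℂ)⁻¹) * t ^ (n + 1)
      = (((p : ℂ) - 1) ^ 2 * x / (p : ℂ) ^ 2) * ((n : ℂ) * x ^ n)
        + (2 * ((p : ℂ) - 1) * x / (p : ℂ)) * x ^ n := by
    intro n
    rw [htot n, hx, mul_pow, pow_succ]
    field_simp
    ring
  have hs1 : Summable (fun n : ℕ => (n : ℂ) * x ^ n) :=
    (hasSum_coe_mul_geometric_of_norm_lt_one h).summable
  have hs0 : Summable (fun n : ℕ => x ^ n) := summable_geometric_of_norm_lt_one h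
  calc 1 + ∑' n : ℕ, (Nat.totient (p ^ (n + 1)) : ℂ) *
        (((n : ℂ) + 1) * (1 - (p : ℂ)⁻¹) + 1 + (p : ℂ)⁻¹) * t ^ (n + 1)
      = 1 + ∑' n : ℕ, ((((p : ℂ) - 1) ^ 2 * x / (p : ℂ) ^ 2) * ((n : ℂ) * x ^ n)
        + (2 * ((p : ℂ) - 1) * x / (p : ℂ)) * x ^ n) := by
        congr 1; exact tsum_congr key
    _ = 1 + ((((p : ℂ) - 1) ^ 2 * x / (p : ℂ) ^ 2) * (x / (1 - x) ^ 2)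
        + (2 * ((p : ℂ) - 1) * x / (p : ℂ)) * (1 - x)⁻¹) := by
        rw [Summable.tsum_add (hs1.mul_left _) (hs0.mul_left _), tsum_mul_left, tsum_mul_left,
          tsum_coe_mul_geometric_of_norm_lt_one h, tsum_geometric_of_norm_lt_one h]
    _ = ((1 - t) / (1 - (p : ℂ) * t)) ^ 2 := by
        rw [← hx]
        field_simp
        ring
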